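/- arXiv:0804.1565 — 3 statements merged into one kernel-verified Lean document; each statement's English description precedes it below -/
import Mathlib

section
/- For every positive integer N, the reduction map Sp(4,ℤ) → Sp(4,ℤ/Nℤ), given by reducing each matrix entry modulo N, is surjective. -/
set_option linter.unusedSectionVars false

open Matrix

namespace SP4

variable {R : Type*} [CommRing R]

abbrev Idx := Fin 2 ⊕ Fin 2

@[simp] theorem J_ll (i j : Fin 2) : Matrix.J (Fin 2) R (Sum.inl i) (Sum.inl j) = 0 := by
  simp [Matrix.J, fromBlocks]
@[simp] theorem J_lr (i j : Fin 2) :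
    Matrix.J (Fin 2) R (Sum.inl i) (Sum.inr j) = -(if i = j then 1 else 0) := by
  simp [Matrix.J, fromBlocks, one_apply]
@[simp] theorem J_rl (i j : Fin 2) :
    Matrix.J (Fin 2) R (Sum.inr i) (Sum.inl j) = (if i = j then 1 else 0) := by
  simp [Matrix.J, fromBlocks, one_apply]
@[simp] theorem J_rr (i j : Fin 2) : Matrix.J (Fin 2) R (Sum.inr i) (Sum.inr j) = 0 := by
  simp [Matrix.J, fromBlocks]

/-- The symplectic form. -/
def ω (x y : Idx → R) : R := x ⬝ᵥ (Matrix.J (Fin 2) R).mulVec y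

/-- Symplectic transvection along `v` with parameter `a`. -/
def Tv (v : Idx → R) (a : R) : Matrix Idx Idx R :=
  1 + a • vecMulVec ((Matrix.J (Fin 2) R).mulVec v) v

theorem omega_expand (x y : Idx → R) :
    ω x y = x (Sum.inr 0) * y (Sum.inl 0) + x (Sum.inr 1) * y (Sum.inl 1)
      - x (Sum.inl 0) * y (Sum.inr 0) - x (Sum.inl 1) * y (Sum.inr 1) := by
  simp [ω, dotProduct, mulVec, Fintype.sum_sum_type, Fin.sum_univ_two]
  ring

theorem mul_Tv_apply (B : Matrix Idx Idx R) (v : Idx → R) (a : R) (i : Idx) :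
    (B * Tv v a) i = B i + (a * ω (B i) v) • v := by
  funext j
  show (B * Tv v a) i j = B i j + (a * ω (B i) v) * v j
  simp only [Tv, Matrix.mul_add, Matrix.mul_one, Matrix.mul_smul, Matrix.add_apply,
    Matrix.smul_apply, smul_eq_mul, mul_apply, vecMulVec_apply, mulVec, dotProduct,
    Fintype.sum_sum_type, Fin.sum_univ_two, omega_expand, J_ll, J_lr, J_rl, J_rr]
  rcases j with j | j <;> fin_cases j <;>
    simp [one_apply, Fin.ext_iff] <;> ring

theorem mul_J_mul_transpose_apply (M : Matrix Idx Idx R) (i j : Idx) :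
    (M * Matrix.J (Fin 2) R * Mᵀ) i j = ω (M i) (M j) := by
  simp [mul_apply, ω, dotProduct, mulVec, Fintype.sum_sum_type, Fin.sum_univ_two,
    transpose_apply, Finset.mul_sum, Finset.sum_mul]
  ring

theorem rows_omega {B : Matrix Idx Idx R} (hB : B ∈ Matrix.symplecticGroup (Fin 2) R)
    (i j : Idx) : ω (B i) (B j) = Matrix.J (Fin 2) R i j := by
  rw [← mul_J_mul_transpose_apply]
  rw [SymplecticGroup.mem_iff] at hB
  rw [hB]

theorem Tv_row (v : Idx → R) (a : R) (i : Idx) :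
    Tv v a i = (1 : Matrix Idx Idx R) i + (a * ω ((1 : Matrix Idx Idx R) i) v) • v := by
  have := mul_Tv_apply (1 : Matrix Idx Idx R) v a i
  rwa [one_mul] at this

theorem Tv_mem (v : Idx → R) (a : R) : Tv v a ∈ Matrix.symplecticGroup (Fin 2) R := by
  rw [SymplecticGroup.mem_iff]
  ext i j
  rw [mul_J_mul_transpose_apply, Tv_row, Tv_row]
  simp only [omega_expand, Pi.add_apply, Pi.smul_apply, smul_eq_mul]
  rcases i with i | i <;> rcases j with j | j <;> fin_cases i <;> fin_cases j <;>
    simp [one_apply, Fin.ext_iff] <;> ring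

theorem Tv_mul_inv (v : Idx → R) (a : R) : Tv v a * Tv v (-a) = 1 := by
  ext i j
  rw [show (Tv v a * Tv v (-a)) i j = ((Tv v a * Tv v (-a)) i) j from rfl, mul_Tv_apply]
  simp only [Tv_row, omega_expand, Pi.add_apply, Pi.smul_apply, smul_eq_mul]
  rcases i with i | i <;> rcases j with j | j <;> fin_cases i <;> fin_cases j <;>
    simp [one_apply, Fin.ext_iff] <;> ring

theorem Tv_map {S : Type*} [CommRing S] (f : R →+* S) (v : Idx → R) (a : R) :
    (Tv v a).map f = Tv (fun i => f (v i)) (f a) := by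
  ext i j
  simp only [Tv, Matrix.map_apply, Matrix.add_apply, Matrix.smul_apply, smul_eq_mul,
    vecMulVec_apply, mulVec, dotProduct, Fintype.sum_sum_type, Fin.sum_univ_two]
  rcases i with i | i <;> rcases j with j | j <;> fin_cases i <;> fin_cases j <;>
    simp [one_apply, Fin.ext_iff, Matrix.J, fromBlocks, map_add, _root_.map_mul, map_neg,
      _root_.map_one]

/-! ### Explicit 4-vectors -/

def mkv (p q r s : R) : Idx → R := Sum.elim ![p, q] ![r, s]

@[simp] theorem mkv_l0 (p q r s : R) : mkv p q r s (Sum.inl 0) = p := rfl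
@[simp] theorem mkv_l1 (p q r s : R) : mkv p q r s (Sum.inl 1) = q := rfl
@[simp] theorem mkv_r0 (p q r s : R) : mkv p q r s (Sum.inr 0) = r := rfl
@[simp] theorem mkv_r1 (p q r s : R) : mkv p q r s (Sum.inr 1) = s := rfl

theorem mkv_eta (x : Idx → R) :
    mkv (x (Sum.inl 0)) (x (Sum.inl 1)) (x (Sum.inr 0)) (x (Sum.inr 1)) = x := by
  funext j; rcases j with j | j <;> fin_cases j <;> simp [mkv]

theorem mkv_congr {p q r s p' q' r' s' : R} (h1 : p = p') (h2 : q = q') (h3 : r = r')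
    (h4 : s = s') : mkv p q r s = mkv p' q' r' s' := by rw [h1, h2, h3, h4]

theorem omega_mkv (p q r s p' q' r' s' : R) :
    ω (mkv p q r s) (mkv p' q' r' s') = r * p' + s * q' - p * r' - q * s' := by
  rw [omega_expand]; simp

theorem add_smul_mkv (p q r s p' q' r' s' c : R) :
    mkv p q r s + c • mkv p' q' r' s' = mkv (p + c * p') (q + c * q') (r + c * r')
      (s + c * s') := by
  funext j; rcases j with j | j <;> fin_cases j <;> simp [mkv]


section Arith

theorem exists_coprime_add_mul (a g : ℤ) (N : ℕ) (hN : 0 < N)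
    (h : Int.gcd (↑(Int.gcd a g)) (N : ℤ) = 1) :
    ∃ t : ℤ, Int.gcd (a + t * g) (N : ℤ) = 1 := by
  set t : ℤ := ∏ p ∈ N.primeFactors.filter (fun p : ℕ => ¬ (p : ℤ) ∣ a), (p : ℤ) with ht
  refine ⟨t, ?_⟩
  by_contra hne
  obtain ⟨p, pp, hpm⟩ := Nat.exists_prime_and_dvd hne
  have pprime : Prime (p : ℤ) := Nat.prime_iff_prime_int.mp pp
  have hpN : (p : ℤ) ∣ (N : ℤ) :=
    (Int.natCast_dvd_natCast.mpr hpm).trans (Int.gcd_dvd_right _ _)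
  have hpag : (p : ℤ) ∣ a + t * g :=
    (Int.natCast_dvd_natCast.mpr hpm).trans (Int.gcd_dvd_left _ _)
  by_cases hpa : (p : ℤ) ∣ a
  · have hpg : ¬ (p : ℤ) ∣ g := by
      intro hg
      have h2 : (p : ℤ) ∣ ↑(Int.gcd (↑(Int.gcd a g)) (N : ℤ)) :=
        Int.dvd_coe_gcd (Int.dvd_coe_gcd hpa hg) hpN
      rw [h] at h2
      exact pp.ne_one (Nat.dvd_one.mp (Int.natCast_dvd_natCast.mp (by simpa using h2)))
    have hpt : ¬ (p : ℤ) ∣ t := by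
      intro htd
      obtain ⟨q, hq, hqd⟩ := (Prime.dvd_finset_prod_iff pprime _).mp htd
      have hq' := Finset.mem_filter.mp hq
      have hqp : p = q :=
        (Nat.prime_dvd_prime_iff_eq pp (Nat.mem_primeFactors.mp hq'.1).1).mp
          (Int.natCast_dvd_natCast.mp hqd)
      exact hq'.2 (hqp ▸ hpa)
    have hptg : (p : ℤ) ∣ t * g := by
      have := dvd_sub hpag hpa
      simpa using this
    exact (pprime.dvd_mul.mp hptg).elim hpt hpg
  · have hmem : p ∈ N.primeFactors.filter (fun p : ℕ => ¬ (p : ℤ) ∣ a) :=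
      Finset.mem_filter.mpr ⟨Nat.mem_primeFactors.mpr ⟨pp, Int.natCast_dvd_natCast.mp hpN,
        hN.ne'⟩, hpa⟩
    have hpt : (p : ℤ) ∣ t := by
      rw [ht]; exact Finset.dvd_prod_of_mem _ hmem
    have : (p : ℤ) ∣ a := by
      have := dvd_sub hpag (hpt.mul_right g)
      simpa using this
    exact hpa this

theorem isUnit_cast_of_gcd_eq_one {m : ℤ} {N : ℕ} (h : Int.gcd m (N : ℤ) = 1) :
    IsUnit ((m : ZMod N)) := by
  have h1 : IsCoprime m (N : ℤ) := Int.isCoprime_iff_gcd_eq_one.mpr h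
  have h2 := h1.map (Int.castRingHom (ZMod N))
  simp only [Int.coe_castRingHom, Int.cast_natCast, ZMod.natCast_self] at h2
  exact isCoprime_zero_right.mp h2

theorem key_arith (N : ℕ) (hN : 0 < N) (a b c d : ℤ)
    (h : ∃ X Y Z W V : ℤ, a * X + b * Y + c * Z + d * W + (N : ℤ) * V = 1) :
    ∃ x y z : ℤ, IsUnit (((a + (b * x + c * y + d * z) : ℤ) : ZMod N)) := by
  obtain ⟨X, Y, Z, W, V, hc⟩ := h
  set G2 : ℕ := Int.gcd c d with hG2
  set G : ℕ := Int.gcd b (G2 : ℤ) with hG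
  have hgcd : Int.gcd (↑(Int.gcd a (G : ℤ))) (N : ℤ) = 1 := by
    set m : ℕ := Int.gcd (↑(Int.gcd a (G : ℤ))) (N : ℤ) with hm
    have hma : (m : ℤ) ∣ a := (Int.gcd_dvd_left _ _).trans (Int.gcd_dvd_left _ _)
    have hmG : (m : ℤ) ∣ (G : ℤ) := (Int.gcd_dvd_left _ _).trans (Int.gcd_dvd_right _ _)
    have hmb : (m : ℤ) ∣ b := hmG.trans (Int.gcd_dvd_left _ _)
    have hmG2 : (m : ℤ) ∣ (G2 : ℤ) := hmG.trans (Int.gcd_dvd_right _ _)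
    have hmc : (m : ℤ) ∣ c := hmG2.trans (Int.gcd_dvd_left _ _)
    have hmd : (m : ℤ) ∣ d := hmG2.trans (Int.gcd_dvd_right _ _)
    have hmN : (m : ℤ) ∣ (N : ℤ) := Int.gcd_dvd_right _ _
    have h1 : (m : ℤ) ∣ 1 := by
      rw [← hc]
      exact dvd_add (dvd_add (dvd_add (dvd_add (hma.mul_right _) (hmb.mul_right _))
        (hmc.mul_right _)) (hmd.mul_right _)) (hmN.mul_right _)
    exact Nat.dvd_one.mp (Int.natCast_dvd_natCast.mp (by simpa using h1))
  obtain ⟨t, ht⟩ := exists_coprime_add_mul a (G : ℤ) N hN hgcd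
  have hbez1 : (G : ℤ) = b * Int.gcdA b (G2 : ℤ) + (G2 : ℤ) * Int.gcdB b (G2 : ℤ) := by
    rw [hG]; exact Int.gcd_eq_gcd_ab b (G2 : ℤ)
  have hbez2 : (G2 : ℤ) = c * Int.gcdA c d + d * Int.gcdB c d := by
    rw [hG2]; exact Int.gcd_eq_gcd_ab c d
  refine ⟨t * Int.gcdA b (G2 : ℤ),
    t * Int.gcdB b (G2 : ℤ) * Int.gcdA c d,
    t * Int.gcdB b (G2 : ℤ) * Int.gcdB c d, ?_⟩
  have heq : a + (b * (t * Int.gcdA b (G2 : ℤ)) + c * (t * Int.gcdB b (G2 : ℤ) * Int.gcdA c d)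
      + d * (t * Int.gcdB b (G2 : ℤ) * Int.gcdB c d)) = a + t * (G : ℤ) := by
    rw [hbez1, hbez2]; ring
  rw [heq]
  exact isUnit_cast_of_gcd_eq_one ht

end Arith

section Lift

variable (N : ℕ) [NeZero N]

def Lift (B : Matrix Idx Idx (ZMod N)) : Prop :=
  ∃ A ∈ Matrix.symplecticGroup (Fin 2) ℤ, A.map (Int.cast : ℤ → ZMod N) = B

theorem intlift (x : ZMod N) : (((x.val : ℤ) : ZMod N)) = x := by
  rw [Int.cast_natCast]
  exact ZMod.natCast_rightInverse x

theorem lift_one : Lift N 1 :=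
  ⟨1, one_mem _, Matrix.map_one _ (by simp) (by simp)⟩

theorem lift_mul {B C : Matrix Idx Idx (ZMod N)} (hB : Lift N B) (hC : Lift N C) :
    Lift N (B * C) := by
  obtain ⟨A, hA, rfl⟩ := hB
  obtain ⟨A', hA', rfl⟩ := hC
  refine ⟨A * A', mul_mem hA hA', ?_⟩
  rw [show (Int.cast : ℤ → ZMod N) = ⇑(Int.castRingHom (ZMod N)) from rfl]
  exact Matrix.map_mul

theorem lift_Tv (v : Idx → ZMod N) (a : ZMod N) : Lift N (Tv v a) := by
  refine ⟨Tv (fun i => ((v i).val : ℤ)) ((a.val : ℤ)), Tv_mem _ _, ?_⟩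
  rw [show (Int.cast : ℤ → ZMod N) = ⇑(Int.castRingHom (ZMod N)) from rfl]
  have h1 : (fun i => (Int.castRingHom (ZMod N)) (((v i).val : ℤ))) = v := by
    funext i; exact intlift N _
  have h2 : (Int.castRingHom (ZMod N)) ((a.val : ℤ)) = a := intlift N _
  rw [Tv_map (Int.castRingHom (ZMod N)), h1, h2]

theorem lift_of_mul_Tv {B : Matrix Idx Idx (ZMod N)} (v : Idx → ZMod N) (a : ZMod N)
    (h : Lift N (B * Tv v a)) : Lift N B := by
  have hB : B = (B * Tv v a) * Tv v (-a) := by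
    rw [Matrix.mul_assoc, Tv_mul_inv, Matrix.mul_one]
  rw [hB]
  exact lift_mul N h (lift_Tv N v (-a))

theorem combo_of_zmod (P : ℤ) (h : ((P : ZMod N)) = 1) : ∃ V : ℤ, P + (N : ℤ) * V = 1 := by
  have h0 : ((P - 1 : ℤ) : ZMod N) = 0 := by push_cast [h]; ring
  obtain ⟨k, hk⟩ := (ZMod.intCast_zmod_eq_zero_iff_dvd _ N).mp h0
  exact ⟨-k, by linarith⟩

end Lift

theorem lift_of_mem (N : ℕ) [NeZero N] (hN : 0 < N) (B : Matrix Idx Idx (ZMod N))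
    (hB : B ∈ Matrix.symplecticGroup (Fin 2) (ZMod N)) :
    Lift N B := by
  have cv : ∀ x : ZMod N, (((x.val : ℤ) : ZMod N)) = x := intlift N
  -- Step 1 : arithmetic to find a good intermediate vector
  set u : Idx → ZMod N := B (Sum.inl 0) with hu
  set w : Idx → ZMod N := B (Sum.inr 0) with hw
  have h1 : ω u w = -1 := by
    have := rows_omega hB (Sum.inl 0) (Sum.inr 0)
    simpa using this
  rw [omega_expand] at h1
  set a1 : ℤ := ((u (Sum.inl 0)).val : ℤ) with ha1
  set a2 : ℤ := ((u (Sum.inl 1)).val : ℤ) with ha2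
  set a3 : ℤ := ((u (Sum.inr 0)).val : ℤ) with ha3
  set a4 : ℤ := ((u (Sum.inr 1)).val : ℤ) with ha4
  set b1 : ℤ := ((w (Sum.inl 0)).val : ℤ) with hb1
  set b2 : ℤ := ((w (Sum.inl 1)).val : ℤ) with hb2
  set b3 : ℤ := ((w (Sum.inr 0)).val : ℤ) with hb3
  set b4 : ℤ := ((w (Sum.inr 1)).val : ℤ) with hb4
  have hP : ((a1 * b3 + a2 * b4 + a3 * (-b1) + a4 * (-b2) : ℤ) : ZMod N) = 1 := by
    simp only [Int.cast_add, Int.cast_mul, Int.cast_neg, ha1, ha2, ha3, ha4,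
      hb1, hb2, hb3, hb4, cv]
    linear_combination -h1
  obtain ⟨V1, hV1⟩ := combo_of_zmod N _ hP
  obtain ⟨x, y, z, hu1⟩ := key_arith N hN (-a1) a2 a3 a4
    ⟨-b3, b4, -b1, -b2, V1, by linear_combination hV1⟩
  set zv : Idx → ZMod N :=
    mkv (((y : ℤ) : ZMod N)) (((z : ℤ) : ZMod N)) 1 (((-x : ℤ) : ZMod N)) with hzv
  set ε : ZMod N := ω u zv with hεdef
  have hεu : IsUnit ε := by
    have hh : ε = ((-a1 + (a2 * x + a3 * y + a4 * z) : ℤ) : ZMod N) := by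
      rw [hεdef, omega_expand]
      simp only [hzv, mkv_l0, mkv_l1, mkv_r0, mkv_r1]
      simp only [Int.cast_add, Int.cast_mul, Int.cast_neg, ha1, ha2, ha3, ha4, cv]
      ring
    rw [hh]; exact hu1
  set l1 : ZMod N := ↑hεu.unit⁻¹ with hl1
  have hl1e : ε * l1 = 1 := by
    rw [hl1, mul_comm]
    exact hεu.val_inv_mul
  -- B1 : row (inl 0) becomes zv
  set B1 := B * Tv (zv - u) l1 with hB1def
  have hB1 : B1 ∈ Matrix.symplecticGroup (Fin 2) (ZMod N) := mul_mem hB (Tv_mem _ _)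
  have hrow1 : B1 (Sum.inl 0) = zv := by
    rw [hB1def, mul_Tv_apply, ← hu]
    have e1 : ω u (zv - u) = ε := by
      rw [hεdef, omega_expand, omega_expand]
      simp only [Pi.sub_apply]
      ring
    rw [e1, mul_comm l1 ε, hl1e, one_smul]
    abel
  -- B2 : row (inl 0) becomes e₁ = mkv 1 0 0 0
  set B2 := B1 * Tv (mkv 1 0 0 0 - zv) 1 with hB2def
  have hB2 : B2 ∈ Matrix.symplecticGroup (Fin 2) (ZMod N) := mul_mem hB1 (Tv_mem _ _)
  have hrow2 : B2 (Sum.inl 0) = mkv 1 0 0 0 := by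
    rw [hB2def, mul_Tv_apply, hrow1]
    have e2 : ω zv (mkv 1 0 0 0 - zv) = 1 := by
      rw [omega_expand]
      simp only [Pi.sub_apply, hzv, mkv_l0, mkv_l1, mkv_r0, mkv_r1]
      ring
    rw [e2, mul_one, one_smul]
    abel
  -- B3 : row (inr 0) gets a unit (=1) first coordinate
  have h3 : (B2 (Sum.inr 0)) (Sum.inr 0) = 1 := by
    have h := rows_omega hB2 (Sum.inl 0) (Sum.inr 0)
    rw [hrow2, omega_expand] at h
    simp only [mkv_l0, mkv_l1, mkv_r0, mkv_r1] at h
    norm_num at h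
    first | exact h | linear_combination h | linear_combination -h
  set q2 : ZMod N := B2 (Sum.inr 0) (Sum.inl 1) with hq2
  set q4 : ZMod N := B2 (Sum.inr 0) (Sum.inr 1) with hq4
  set B3 := B2 * Tv (mkv 1 0 0 0) (1 - B2 (Sum.inr 0) (Sum.inl 0)) with hB3def
  have hB3 : B3 ∈ Matrix.symplecticGroup (Fin 2) (ZMod N) := mul_mem hB2 (Tv_mem _ _)
  have hrow3a : B3 (Sum.inl 0) = mkv 1 0 0 0 := by
    rw [hB3def, mul_Tv_apply, hrow2]
    have e : ω (mkv 1 0 0 0) (mkv (1 : ZMod N) 0 0 0) = 0 := by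
      rw [omega_expand]; simp
    rw [e, mul_zero, zero_smul, add_zero]
  have hrow3b : B3 (Sum.inr 0) = mkv 1 q2 1 q4 := by
    rw [hB3def, mul_Tv_apply]
    have e : ω (B2 (Sum.inr 0)) (mkv 1 0 0 0) = 1 := by
      rw [omega_expand]
      simp only [mkv_l0, mkv_l1, mkv_r0, mkv_r1, h3]
      ring
    rw [e, mul_one]
    funext j
    rcases j with j | j <;> fin_cases j <;>
      simp [h3, hq2, hq4] <;> ring
  -- B4 : row (inr 0) becomes f₁ = mkv 0 0 1 0, row (inl 0) preserved
  set B4 := B3 * Tv (mkv 0 0 1 0 - mkv 1 q2 1 q4) (-1) with hB4def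
  have hB4 : B4 ∈ Matrix.symplecticGroup (Fin 2) (ZMod N) := mul_mem hB3 (Tv_mem _ _)
  have hrow4a : B4 (Sum.inl 0) = mkv 1 0 0 0 := by
    rw [hB4def, mul_Tv_apply, hrow3a]
    have e : ω (mkv (1 : ZMod N) 0 0 0) (mkv 0 0 1 0 - mkv 1 q2 1 q4) = 0 := by
      rw [omega_expand]
      simp only [Pi.sub_apply, mkv_l0, mkv_l1, mkv_r0, mkv_r1]
      ring
    rw [e, mul_zero, zero_smul, add_zero]
  have hrow4b : B4 (Sum.inr 0) = mkv 0 0 1 0 := by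
    rw [hB4def, mul_Tv_apply, hrow3b]
    have e : ω (mkv (1 : ZMod N) q2 1 q4) (mkv 0 0 1 0 - mkv 1 q2 1 q4) = -1 := by
      rw [omega_expand]
      simp only [Pi.sub_apply, mkv_l0, mkv_l1, mkv_r0, mkv_r1]
      ring
    rw [e, show ((-1 : ZMod N) * -1) = 1 by ring, one_smul]
    abel
  -- structure of the remaining two rows
  set w2 : Idx → ZMod N := B4 (Sum.inl 1) with hw2
  set w4 : Idx → ZMod N := B4 (Sum.inr 1) with hw4
  have hA1 : w2 (Sum.inr 0) = 0 := by
    have h := rows_omega hB4 (Sum.inl 1) (Sum.inl 0)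
    rw [← hw2] at h
    rw [hrow4a, omega_expand] at h
    simp only [mkv_l0, mkv_l1, mkv_r0, mkv_r1, J_ll] at h
    first | exact h | linear_combination h | linear_combination -h
  have hA2 : w2 (Sum.inl 0) = 0 := by
    have h := rows_omega hB4 (Sum.inl 1) (Sum.inr 0)
    rw [← hw2] at h
    rw [hrow4b, omega_expand] at h
    simp only [mkv_l0, mkv_l1, mkv_r0, mkv_r1, J_lr] at h
    simp at h
    first | exact h | linear_combination h | linear_combination -h
  have hA3 : w4 (Sum.inr 0) = 0 := by
    have h := rows_omega hB4 (Sum.inr 1) (Sum.inl 0)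
    rw [← hw4] at h
    rw [hrow4a, omega_expand] at h
    simp only [mkv_l0, mkv_l1, mkv_r0, mkv_r1, J_rl] at h
    simp at h
    first | exact h | linear_combination h | linear_combination -h
  have hA4 : w4 (Sum.inl 0) = 0 := by
    have h := rows_omega hB4 (Sum.inr 1) (Sum.inr 0)
    rw [← hw4] at h
    rw [hrow4b, omega_expand] at h
    simp only [mkv_l0, mkv_l1, mkv_r0, mkv_r1, J_rr] at h
    simp at h
    first | exact h | linear_combination h | linear_combination -h
  set bb : ZMod N := w2 (Sum.inl 1) with hbb
  set dd : ZMod N := w2 (Sum.inr 1) with hdd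
  set bb' : ZMod N := w4 (Sum.inl 1) with hbb'
  set dd' : ZMod N := w4 (Sum.inr 1) with hdd'
  have hdet : bb * dd' - dd * bb' = 1 := by
    have h := rows_omega hB4 (Sum.inl 1) (Sum.inr 1)
    rw [omega_expand] at h
    simp only [J_lr] at h
    rw [← hw2, ← hw4] at h
    rw [hA1, hA2, hA3, hA4] at h
    simp at h
    first | exact h | linear_combination h | linear_combination -h
  -- arithmetic to make the (inl 1, inl 1) entry a unit
  set c1 : ℤ := ((bb).val : ℤ) with hc1
  set c2 : ℤ := ((dd).val : ℤ) with hc2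
  set c3 : ℤ := ((bb').val : ℤ) with hc3
  set c4 : ℤ := ((dd').val : ℤ) with hc4
  have hP2 : ((c1 * c4 + c2 * (-c3) : ℤ) : ZMod N) = 1 := by
    simp only [Int.cast_add, Int.cast_mul, Int.cast_neg, hc1, hc2, hc3, hc4, cv]
    linear_combination hdet
  obtain ⟨V2, hV2⟩ := combo_of_zmod N _ hP2
  obtain ⟨t, yy, zz, hu2⟩ := key_arith N hN c1 c2 0 0
    ⟨c4, -c3, 0, 0, V2, by linear_combination hV2⟩
  set ε2 : ZMod N := bb + dd * (((t : ℤ) : ZMod N)) with hε2d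
  have hε2 : IsUnit ε2 := by
    have hh : ε2 = ((c1 + (c2 * t + 0 * yy + 0 * zz) : ℤ) : ZMod N) := by
      rw [hε2d]
      simp only [Int.cast_add, Int.cast_mul, Int.cast_zero, hc1, hc2, cv]
      ring
    rw [hh]; exact hu2
  -- B5
  set B5 := B4 * Tv (mkv 0 1 0 0) (((t : ℤ) : ZMod N)) with hB5def
  have hB5 : B5 ∈ Matrix.symplecticGroup (Fin 2) (ZMod N) := mul_mem hB4 (Tv_mem _ _)
  have ev2e1 : ω (mkv (1 : ZMod N) 0 0 0) (mkv 0 1 0 0) = 0 := by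
    rw [omega_expand]; simp
  have ev2f1 : ω (mkv (0 : ZMod N) 0 1 0) (mkv 0 1 0 0) = 0 := by
    rw [omega_expand]; simp
  have hrow5a : B5 (Sum.inl 0) = mkv 1 0 0 0 := by
    rw [hB5def, mul_Tv_apply, hrow4a, ev2e1, mul_zero, zero_smul, add_zero]
  have hrow5b : B5 (Sum.inr 0) = mkv 0 0 1 0 := by
    rw [hB5def, mul_Tv_apply, hrow4b, ev2f1, mul_zero, zero_smul, add_zero]
  have hrow5c : B5 (Sum.inl 1) = mkv 0 ε2 0 dd := by
    rw [hB5def, mul_Tv_apply, ← hw2]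
    have e : ω w2 (mkv 0 1 0 0) = dd := by
      rw [omega_expand]; simp [← hdd]
    rw [e]
    funext j
    rcases j with j | j <;> fin_cases j <;>
      simp [hA1, hA2, ← hbb, ← hdd, hε2d] <;> ring
  have hrow5d : B5 (Sum.inr 1) = mkv 0 (bb' + dd' * (((t : ℤ) : ZMod N))) 0 dd' := by
    rw [hB5def, mul_Tv_apply, ← hw4]
    have e : ω w4 (mkv 0 1 0 0) = dd' := by
      rw [omega_expand]; simp [← hdd']
    rw [e]
    funext j
    rcases j with j | j <;> fin_cases j <;>
      simp [hA3, hA4, ← hbb', ← hdd'] <;> ring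
  set r2 : ZMod N := bb' + dd' * (((t : ℤ) : ZMod N)) with hr2
  -- B6
  set μ : ZMod N := ↑hε2.unit⁻¹ * (dd - 1) with hμ
  have hμε : μ * ε2 = dd - 1 := by
    rw [hμ, mul_comm (↑hε2.unit⁻¹ : ZMod N) (dd - 1), mul_assoc, hε2.val_inv_mul, mul_one]
  set B6 := B5 * Tv (mkv 0 0 0 1) μ with hB6def
  have hB6 : B6 ∈ Matrix.symplecticGroup (Fin 2) (ZMod N) := mul_mem hB5 (Tv_mem _ _)
  have fv2e1 : ω (mkv (1 : ZMod N) 0 0 0) (mkv 0 0 0 1) = 0 := by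
    rw [omega_expand]; simp
  have fv2f1 : ω (mkv (0 : ZMod N) 0 1 0) (mkv 0 0 0 1) = 0 := by
    rw [omega_expand]; simp
  have hrow6a : B6 (Sum.inl 0) = mkv 1 0 0 0 := by
    rw [hB6def, mul_Tv_apply, hrow5a, fv2e1, mul_zero, zero_smul, add_zero]
  have hrow6b : B6 (Sum.inr 0) = mkv 0 0 1 0 := by
    rw [hB6def, mul_Tv_apply, hrow5b, fv2f1, mul_zero, zero_smul, add_zero]
  have hrow6c : B6 (Sum.inl 1) = mkv 0 ε2 0 1 := by
    rw [hB6def, mul_Tv_apply, hrow5c]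
    have e : ω (mkv (0 : ZMod N) ε2 0 dd) (mkv 0 0 0 1) = -ε2 := by
      rw [omega_expand]; simp
    rw [e, add_smul_mkv]
    exact mkv_congr (by ring) (by ring) (by ring) (by linear_combination -hμε)
  have hrow6d : B6 (Sum.inr 1) = mkv 0 r2 0 (dd' - μ * r2) := by
    rw [hB6def, mul_Tv_apply, hrow5d]
    have e : ω (mkv (0 : ZMod N) r2 0 dd') (mkv 0 0 0 1) = -r2 := by
      rw [omega_expand]; simp
    rw [e, add_smul_mkv]
    exact mkv_congr (by ring) (by ring) (by ring) (by ring)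
  set s4 : ZMod N := dd' - μ * r2 with hs4
  -- B7
  set B7 := B6 * Tv (mkv 0 1 0 0) (1 - ε2) with hB7def
  have hB7 : B7 ∈ Matrix.symplecticGroup (Fin 2) (ZMod N) := mul_mem hB6 (Tv_mem _ _)
  have hrow7a : B7 (Sum.inl 0) = mkv 1 0 0 0 := by
    rw [hB7def, mul_Tv_apply, hrow6a, ev2e1, mul_zero, zero_smul, add_zero]
  have hrow7b : B7 (Sum.inr 0) = mkv 0 0 1 0 := by
    rw [hB7def, mul_Tv_apply, hrow6b, ev2f1, mul_zero, zero_smul, add_zero]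
  have hrow7c : B7 (Sum.inl 1) = mkv 0 1 0 1 := by
    rw [hB7def, mul_Tv_apply, hrow6c]
    have e : ω (mkv (0 : ZMod N) ε2 0 1) (mkv 0 1 0 0) = 1 := by
      rw [omega_expand]; simp
    rw [e, add_smul_mkv]
    exact mkv_congr (by ring) (by ring) (by ring) (by ring)
  have hrow7d : B7 (Sum.inr 1) = mkv 0 (r2 + (1 - ε2) * s4) 0 s4 := by
    rw [hB7def, mul_Tv_apply, hrow6d]
    have e : ω (mkv (0 : ZMod N) r2 0 s4) (mkv 0 1 0 0) = s4 := by
      rw [omega_expand]; simp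
    rw [e, add_smul_mkv]
    exact mkv_congr (by ring) (by ring) (by ring) (by ring)
  set r3 : ZMod N := r2 + (1 - ε2) * s4 with hr3
  -- B8
  set B8 := B7 * Tv (mkv 0 0 0 1) 1 with hB8def
  have hB8 : B8 ∈ Matrix.symplecticGroup (Fin 2) (ZMod N) := mul_mem hB7 (Tv_mem _ _)
  have hrow8a : B8 (Sum.inl 0) = mkv 1 0 0 0 := by
    rw [hB8def, mul_Tv_apply, hrow7a, fv2e1, mul_zero, zero_smul, add_zero]
  have hrow8b : B8 (Sum.inr 0) = mkv 0 0 1 0 := by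
    rw [hB8def, mul_Tv_apply, hrow7b, fv2f1, mul_zero, zero_smul, add_zero]
  have hrow8c : B8 (Sum.inl 1) = mkv 0 1 0 0 := by
    rw [hB8def, mul_Tv_apply, hrow7c]
    have e : ω (mkv (0 : ZMod N) 1 0 1) (mkv 0 0 0 1) = -1 := by
      rw [omega_expand]; simp
    rw [e, add_smul_mkv]
    exact mkv_congr (by ring) (by ring) (by ring) (by ring)
  have hrow8d : B8 (Sum.inr 1) = mkv 0 r3 0 (s4 - r3) := by
    rw [hB8def, mul_Tv_apply, hrow7d]
    have e : ω (mkv (0 : ZMod N) r3 0 s4) (mkv 0 0 0 1) = -r3 := by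
      rw [omega_expand]; simp
    rw [e, add_smul_mkv]
    exact mkv_congr (by ring) (by ring) (by ring) (by ring)
  set s5 : ZMod N := s4 - r3 with hs5
  have hs5one : s5 = 1 := by
    have h := rows_omega hB8 (Sum.inr 1) (Sum.inl 1)
    rw [hrow8d, hrow8c, omega_expand] at h
    simp only [mkv_l0, mkv_l1, mkv_r0, mkv_r1, J_rl] at h
    simp at h
    first | exact h | linear_combination h | linear_combination -h
  -- B9 = 1
  set B9 := B8 * Tv (mkv 0 1 0 0) (-r3) with hB9def
  have hrow9a : B9 (Sum.inl 0) = mkv 1 0 0 0 := by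
    rw [hB9def, mul_Tv_apply, hrow8a, ev2e1, mul_zero, zero_smul, add_zero]
  have hrow9b : B9 (Sum.inr 0) = mkv 0 0 1 0 := by
    rw [hB9def, mul_Tv_apply, hrow8b, ev2f1, mul_zero, zero_smul, add_zero]
  have hrow9c : B9 (Sum.inl 1) = mkv 0 1 0 0 := by
    rw [hB9def, mul_Tv_apply, hrow8c]
    have e : ω (mkv (0 : ZMod N) 1 0 0) (mkv 0 1 0 0) = 0 := by
      rw [omega_expand]; simp
    rw [e, mul_zero, zero_smul, add_zero]
  have hrow9d : B9 (Sum.inr 1) = mkv 0 0 0 1 := by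
    rw [hB9def, mul_Tv_apply, hrow8d]
    have e : ω (mkv (0 : ZMod N) r3 0 s5) (mkv 0 1 0 0) = s5 := by
      rw [omega_expand]; simp
    rw [e, add_smul_mkv]
    exact mkv_congr (by ring) (by rw [hs5one]; ring) (by ring) (by rw [hs5one]; ring)
  have hB9one : B9 = 1 := by
    ext i j
    rcases i with i | i <;> fin_cases i
    · show B9 (Sum.inl 0) j = (1 : Matrix Idx Idx (ZMod N)) (Sum.inl 0) j
      rw [congrFun hrow9a j]
      rcases j with j | j <;> fin_cases j <;> simp [mkv, one_apply, Fin.ext_iff]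
    · show B9 (Sum.inl 1) j = (1 : Matrix Idx Idx (ZMod N)) (Sum.inl 1) j
      rw [congrFun hrow9c j]
      rcases j with j | j <;> fin_cases j <;> simp [mkv, one_apply, Fin.ext_iff]
    · show B9 (Sum.inr 0) j = (1 : Matrix Idx Idx (ZMod N)) (Sum.inr 0) j
      rw [congrFun hrow9b j]
      rcases j with j | j <;> fin_cases j <;> simp [mkv, one_apply, Fin.ext_iff]
    · show B9 (Sum.inr 1) j = (1 : Matrix Idx Idx (ZMod N)) (Sum.inr 1) j
      rw [congrFun hrow9d j]
      rcases j with j | j <;> fin_cases j <;> simp [mkv, one_apply, Fin.ext_iff]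
  -- conclude by peeling off the transvections
  apply lift_of_mul_Tv N (zv - u) l1
  rw [← hB1def]
  apply lift_of_mul_Tv N (mkv 1 0 0 0 - zv) 1
  rw [← hB2def]
  apply lift_of_mul_Tv N (mkv 1 0 0 0) (1 - B2 (Sum.inr 0) (Sum.inl 0))
  rw [← hB3def]
  apply lift_of_mul_Tv N (mkv 0 0 1 0 - mkv 1 q2 1 q4) (-1)
  rw [← hB4def]
  apply lift_of_mul_Tv N (mkv 0 1 0 0) (((t : ℤ) : ZMod N))
  rw [← hB5def]
  apply lift_of_mul_Tv N (mkv 0 0 0 1) μ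
  rw [← hB6def]
  apply lift_of_mul_Tv N (mkv 0 1 0 0) (1 - ε2)
  rw [← hB7def]
  apply lift_of_mul_Tv N (mkv 0 0 0 1) 1
  rw [← hB8def]
  apply lift_of_mul_Tv N (mkv 0 1 0 0) (-r3)
  rw [← hB9def, hB9one]
  exact lift_one N

end SP4

/-- For every positive integer `N`, the reduction map
`Sp(4,ℤ) → Sp(4,ℤ/Nℤ)`, given by reducing each matrix entry modulo `N`, is surjective:
every symplectic matrix over `ℤ/Nℤ` is the entrywise reduction of a symplectic integer
matrix. -/
theorem sp4_reduction_surjective (N : ℕ) (hN : 0 < N)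
    (B : Matrix (Fin 2 ⊕ Fin 2) (Fin 2 ⊕ Fin 2) (ZMod N))
    (hB : B ∈ Matrix.symplecticGroup (Fin 2) (ZMod N)) :
    ∃ A ∈ Matrix.symplecticGroup (Fin 2) ℤ, A.map (Int.cast : ℤ → ZMod N) = B := by
  haveI : NeZero N := ⟨hN.ne'⟩
  exact SP4.lift_of_mem N hN B hB
end

section
/- For every prime p, the image of Γ₀⁽²⁾(p) under the entrywise reduction map Sp(4,ℤ) → Sp(4,𝔽_p) equals the stabilizer in Sp(4,𝔽_p) of the 2-dimensional totally isotropic subspace 𝔽_p × 𝔽_p × 0 × 0 = span{e₁, e₂} of 𝔽_p⁴; equivalently, Γ₀⁽²⁾(p) is the full preimage of that stabilizer under the reduction map. -/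
open Matrix

/-- The congruence subgroup `Γ₀⁽²⁾(p)` of `Sp(4,ℤ)`: symplectic `4×4` integer matrices
(indexed by `Fin 2 ⊕ Fin 2`) whose lower-left `2×2` block `c` is `≡ 0 mod p`. -/
def Gamma0Sp4 (p : ℕ) : Subgroup (Matrix.symplecticGroup (Fin 2) ℤ) where
  carrier := {M | ∀ i j : Fin 2,
    (p : ℤ) ∣ (M : Matrix (Fin 2 ⊕ Fin 2) (Fin 2 ⊕ Fin 2) ℤ) (Sum.inr i) (Sum.inl j)}
  one_mem' := by
    intro i j
    simp [Matrix.one_apply]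
  mul_mem' := by
    intro M N hM hN i j
    simp only [Submonoid.coe_mul, Matrix.mul_apply]
    refine Finset.dvd_sum ?_
    rintro (k | k) -
    · exact Dvd.dvd.mul_right (hM i k) _
    · exact Dvd.dvd.mul_left (hN k j) _
  inv_mem' := by
    intro M hM i j
    have hco : (↑(M⁻¹) : Matrix (Fin 2 ⊕ Fin 2) (Fin 2 ⊕ Fin 2) ℤ)
        = (-J (Fin 2) ℤ) * (↑M : Matrix (Fin 2 ⊕ Fin 2) (Fin 2 ⊕ Fin 2) ℤ)ᵀ * J (Fin 2) ℤ :=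
      SymplecticGroup.coe_inv M
    have key : ((-J (Fin 2) ℤ) * (↑M : Matrix (Fin 2 ⊕ Fin 2) (Fin 2 ⊕ Fin 2) ℤ)ᵀ * J (Fin 2) ℤ)
          (Sum.inr i) (Sum.inl j)
        = -(↑M : Matrix (Fin 2 ⊕ Fin 2) (Fin 2 ⊕ Fin 2) ℤ) (Sum.inr j) (Sum.inl i) := by
      simp [Matrix.mul_apply, Matrix.J, Matrix.fromBlocks, Fintype.sum_sum_type,
        Matrix.one_apply, Finset.sum_ite_eq, Finset.mul_sum]
    show (p : ℤ) ∣ (↑(M⁻¹) : Matrix (Fin 2 ⊕ Fin 2) (Fin 2 ⊕ Fin 2) ℤ) (Sum.inr i) (Sum.inl j)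
    rw [hco, key]
    exact (hM j i).neg_right

/-- The standard symplectic form on `𝔽_p⁴ = (Fin 2 ⊕ Fin 2) → ZMod p`:
`v(x,y) = xᵀ J y` with `J = (0 1₂; -1₂ 0)`. -/
def standardSymplForm (p : ℕ) (x y : (Fin 2 ⊕ Fin 2) → ZMod p) : ZMod p :=
  x ⬝ᵥ (Matrix.fromBlocks (0 : Matrix (Fin 2) (Fin 2) (ZMod p)) 1 (-1) 0).mulVec y

/-- A subspace `W ⊆ 𝔽_p⁴` is totally isotropic if the standard symplectic form
vanishes identically on `W × W`. -/
def IsTotallyIsotropic (p : ℕ) (W : Submodule (ZMod p) ((Fin 2 ⊕ Fin 2) → ZMod p)) : Prop :=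
  ∀ x ∈ W, ∀ y ∈ W, standardSymplForm p x y = 0

/-- The `2`-dimensional totally isotropic subspace `𝔽_p × 𝔽_p × 0 × 0 = span{e₁, e₂}`
of `𝔽_p⁴`. -/
def stdIsotropicPlane (p : ℕ) : Submodule (ZMod p) ((Fin 2 ⊕ Fin 2) → ZMod p) :=
  Submodule.span (ZMod p)
    {Pi.single (Sum.inl 0) 1, Pi.single (Sum.inl 1) 1}

set_option linter.unusedSectionVars false
set_option linter.unreachableTactic false
set_option linter.unusedTactic false
set_option linter.unnecessarySeqFocus false

section Helpers

variable {R S : Type*} [CommRing R] [CommRing S]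

lemma sp_blocks_iff (a b d : Matrix (Fin 2) (Fin 2) R) :
    fromBlocks a b 0 d ∈ symplecticGroup (Fin 2) R ↔
      a * dᵀ = 1 ∧ d * aᵀ = 1 ∧ b * aᵀ = a * bᵀ := by
  rw [SymplecticGroup.mem_iff, Matrix.J, fromBlocks_transpose, transpose_zero,
    fromBlocks_multiply, fromBlocks_multiply, fromBlocks_inj]
  simp only [Matrix.mul_zero, Matrix.zero_mul, Matrix.mul_one, Matrix.one_mul,
    Matrix.mul_neg, Matrix.neg_mul, add_zero, zero_add, neg_zero, neg_inj, neg_eq_zero]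
  constructor
  · rintro ⟨h1, h2, h3, -⟩
    have h1' : b * aᵀ - a * bᵀ = 0 := by rw [sub_eq_add_neg]; exact h1
    exact ⟨h2, by simpa using h3, sub_eq_zero.mp h1'⟩
  · rintro ⟨h1, h2, h3⟩
    exact ⟨by rw [h3, add_neg_cancel], h1, by simp [h2], trivial⟩

variable {R S : Type*} [CommRing R] [CommRing S]

lemma J_map (f : R →+* S) : (Matrix.J (Fin 2) R).map f = Matrix.J (Fin 2) S := by
  ext (i | i) (j | j) <;>
    simp [Matrix.J, fromBlocks, Matrix.map_apply, Matrix.one_apply, apply_ite f]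

lemma map_mem_sp (f : R →+* S) (M : Matrix (Fin 2 ⊕ Fin 2) (Fin 2 ⊕ Fin 2) R)
    (h : M ∈ symplecticGroup (Fin 2) R) : M.map f ∈ symplecticGroup (Fin 2) S := by
  rw [SymplecticGroup.mem_iff] at h ⊢
  rw [← J_map f, ← Matrix.transpose_map, ← Matrix.map_mul, ← Matrix.map_mul, h]

lemma negJ_entry (M : Matrix (Fin 2 ⊕ Fin 2) (Fin 2 ⊕ Fin 2) R) (i j : Fin 2) :
    ((-Matrix.J (Fin 2) R) * Mᵀ * Matrix.J (Fin 2) R) (Sum.inr i) (Sum.inl j)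
      = -M (Sum.inr j) (Sum.inl i) := by
  simp [Matrix.mul_apply, Matrix.J, Matrix.fromBlocks, Fintype.sum_sum_type,
    Matrix.one_apply, Finset.sum_ite_eq, Finset.mul_sum]


lemma mem_plane_iff (p : ℕ) (x : (Fin 2 ⊕ Fin 2) → ZMod p) :
    x ∈ stdIsotropicPlane p ↔ x (Sum.inr 0) = 0 ∧ x (Sum.inr 1) = 0 := by
  constructor
  · intro hx
    have hle : stdIsotropicPlane p ≤
        LinearMap.ker (LinearMap.proj (R := ZMod p) (φ := fun _ : Fin 2 ⊕ Fin 2 => ZMod p)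
            (Sum.inr 0)) ⊓
          LinearMap.ker (LinearMap.proj (R := ZMod p) (φ := fun _ : Fin 2 ⊕ Fin 2 => ZMod p)
            (Sum.inr 1)) := by
      rw [stdIsotropicPlane, Submodule.span_le]
      rintro y (rfl | rfl) <;>
        simp [Submodule.mem_inf, LinearMap.mem_ker, Pi.single_apply]
    exact Submodule.mem_inf.mp (hle hx)
  · rintro ⟨h0, h1⟩
    have hrep : x = x (Sum.inl 0) • (Pi.single (Sum.inl 0) 1 : (Fin 2 ⊕ Fin 2) → ZMod p)
        + x (Sum.inl 1) • (Pi.single (Sum.inl 1) 1 : (Fin 2 ⊕ Fin 2) → ZMod p) := by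
      funext r
      rcases r with r | r <;> fin_cases r <;>
        simp [Pi.single_apply, h0, h1]
    rw [hrep]
    exact add_mem
      (Submodule.smul_mem _ _ (Submodule.subset_span (by simp)))
      (Submodule.smul_mem _ _ (Submodule.subset_span (by simp)))

lemma map_plane_le (p : ℕ) (C : Matrix (Fin 2 ⊕ Fin 2) (Fin 2 ⊕ Fin 2) (ZMod p))
    (hC : ∀ i j : Fin 2, C (Sum.inr i) (Sum.inl j) = 0) :
    (stdIsotropicPlane p).map (Matrix.mulVecLin C) ≤ stdIsotropicPlane p := by
  rw [stdIsotropicPlane, Submodule.map_span, Submodule.span_le]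
  rintro z ⟨y, (rfl | rfl), rfl⟩ <;>
    · refine (mem_plane_iff p _).mpr ?_
      constructor <;> simp [Matrix.mulVecLin_apply, Matrix.mulVec_single, hC]

lemma stab_iff (p : ℕ) [Fact p.Prime] (B : Matrix (Fin 2 ⊕ Fin 2) (Fin 2 ⊕ Fin 2) (ZMod p))
    (hB : B ∈ symplecticGroup (Fin 2) (ZMod p)) :
    (stdIsotropicPlane p).map (Matrix.mulVecLin B) = stdIsotropicPlane p ↔
      ∀ i j : Fin 2, B (Sum.inr i) (Sum.inl j) = 0 := by
  constructor
  · intro h i j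
    have hgen : (Pi.single (Sum.inl j) 1 : (Fin 2 ⊕ Fin 2) → ZMod p) ∈ stdIsotropicPlane p :=
      Submodule.subset_span (by fin_cases j <;> simp)
    have hmem : B.mulVec (Pi.single (Sum.inl j) 1) ∈ stdIsotropicPlane p := by
      rw [← h]
      exact ⟨_, hgen, rfl⟩
    rw [mem_plane_iff] at hmem
    fin_cases i
    · simpa [Matrix.mulVec_single] using hmem.1
    · simpa [Matrix.mulVec_single] using hmem.2
  · intro hc
    set A : symplecticGroup (Fin 2) (ZMod p) := ⟨B, hB⟩ with hA
    set B' : Matrix (Fin 2 ⊕ Fin 2) (Fin 2 ⊕ Fin 2) (ZMod p) := (A⁻¹).val with hB'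
    have hBB' : B * B' = 1 := by
      have h' : (A * A⁻¹).val = B * B' := rfl
      rw [← h', mul_inv_cancel]
      rfl
    have hB'c : ∀ i j : Fin 2, B' (Sum.inr i) (Sum.inl j) = 0 := by
      intro i j
      have hB'eq : B' = (-Matrix.J (Fin 2) (ZMod p)) * Bᵀ * Matrix.J (Fin 2) (ZMod p) := rfl
      rw [hB'eq, negJ_entry]
      simp [hc j i]
    refine le_antisymm (map_plane_le p B hc) ?_
    have : stdIsotropicPlane p = ((stdIsotropicPlane p).map (Matrix.mulVecLin B')).map
        (Matrix.mulVecLin B) := by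
      rw [← Submodule.map_comp, ← Matrix.mulVecLin_mul, hBB', Matrix.mulVecLin_one,
        Submodule.map_id]
    calc stdIsotropicPlane p
        = ((stdIsotropicPlane p).map (Matrix.mulVecLin B')).map (Matrix.mulVecLin B) := this
      _ ≤ (stdIsotropicPlane p).map (Matrix.mulVecLin B) :=
          Submodule.map_mono (map_plane_le p B' hB'c)

variable {R S : Type*} [CommRing R] [CommRing S]

lemma tr2 (a b c d : R) : !![a, b; c, d]ᵀ = !![a, c; b, d] := by
  ext i j; fin_cases i <;> fin_cases j <;> rfl

def Emb (m : Matrix (Fin 2) (Fin 2) R) : Matrix (Fin 2 ⊕ Fin 2) (Fin 2 ⊕ Fin 2) R :=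
  fromBlocks !![m 0 0, 0; 0, 1] !![m 0 1, 0; 0, 0] !![m 1 0, 0; 0, 0] !![m 1 1, 0; 0, 1]

lemma Emb_mem (m : Matrix (Fin 2) (Fin 2) R) (hm : m.det = 1) :
    Emb m ∈ symplecticGroup (Fin 2) R := by
  rw [det_fin_two] at hm
  rw [SymplecticGroup.mem_iff, Emb, Matrix.J, fromBlocks_transpose, fromBlocks_multiply,
    fromBlocks_multiply, fromBlocks_inj]
  simp only [tr2, Matrix.mul_fin_two]
  refine ⟨?_, ?_, ?_, ?_⟩ <;>
    · ext i j
      fin_cases i <;> fin_cases j <;>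
        simp <;> first | ring1 | linear_combination hm | linear_combination (-1 : R) * hm | linear_combination (-2 : R) * hm | linear_combination (2 : R) * hm

lemma Emb_map (f : R →+* S) (m : Matrix (Fin 2) (Fin 2) R) :
    (Emb m).map f = Emb (m.map f) := by
  ext (i | i) (j | j) <;> fin_cases i <;> fin_cases j <;>
    simp [Emb, fromBlocks, Matrix.map_apply]

lemma Emb_diag (u w : R) :
    Emb !![u, 0; 0, w] = fromBlocks !![u, 0; 0, 1] 0 0 !![w, 0; 0, 1] := by
  ext (i | i) (j | j) <;> fin_cases i <;> fin_cases j <;>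
    simp [Emb, fromBlocks]

lemma zval_cast {p : ℕ} [NeZero p] (z : ZMod p) : (((z.val : ℤ) : ZMod p)) = z := by
  push_cast
  simp [ZMod.natCast_val, ZMod.cast_id]

lemma sl2_lift_aux (p : ℕ) [Fact p.Prime] (m : Matrix (Fin 2) (Fin 2) (ZMod p))
    (hm : m.det = 1) (hc : m 1 0 ≠ 0) :
    ∃ M : Matrix (Fin 2) (Fin 2) ℤ, M.det = 1 ∧ M.map (Int.cast : ℤ → ZMod p) = m := by
  rw [det_fin_two] at hm
  set x : ZMod p := (m 0 0 - 1) * (m 1 0)⁻¹ with hx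
  set y : ZMod p := (m 1 1 - 1) * (m 1 0)⁻¹ with hy
  refine ⟨!![1, (x.val : ℤ); 0, 1] * !![1, 0; ((m 1 0).val : ℤ), 1] * !![1, (y.val : ℤ); 0, 1],
    ?_, ?_⟩
  · rw [det_mul, det_mul, det_fin_two_of, det_fin_two_of, det_fin_two_of]; ring
  · rw [show (Int.cast : ℤ → ZMod p) = ⇑(Int.castRingHom (ZMod p)) from rfl,
      Matrix.map_mul, Matrix.map_mul]
    have h1 : (!![1, (x.val : ℤ); 0, 1]).map (⇑(Int.castRingHom (ZMod p))) = !![1, x; 0, 1] := by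
      ext i j; fin_cases i <;> fin_cases j <;> simp [zval_cast]
    have h2 : (!![1, 0; ((m 1 0).val : ℤ), 1]).map (⇑(Int.castRingHom (ZMod p)))
        = !![1, 0; m 1 0, 1] := by
      ext i j; fin_cases i <;> fin_cases j <;> simp [zval_cast]
    have h3 : (!![1, (y.val : ℤ); 0, 1]).map (⇑(Int.castRingHom (ZMod p))) = !![1, y; 0, 1] := by
      ext i j; fin_cases i <;> fin_cases j <;> simp [zval_cast]
    rw [h1, h2, h3, Matrix.mul_fin_two, Matrix.mul_fin_two]
    rw [Matrix.eta_fin_two m]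
    ext i j
    fin_cases i <;> fin_cases j <;> simp [hx, hy] <;> field_simp <;> first | linear_combination hm | linear_combination

lemma sl2_lift (p : ℕ) [Fact p.Prime] (m : Matrix (Fin 2) (Fin 2) (ZMod p))
    (hm : m.det = 1) :
    ∃ M : Matrix (Fin 2) (Fin 2) ℤ, M.det = 1 ∧ M.map (Int.cast : ℤ → ZMod p) = m := by
  by_cases hc : m 1 0 ≠ 0
  · exact sl2_lift_aux p m hm hc
  push_neg at hc
  have hm' : m 1 1 ≠ 0 := by
    rw [det_fin_two, hc] at hm
    intro h
    rw [h] at hm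
    simp at hm
  have hd : (m * !![1, 0; 1, 1]).det = 1 := by
    rw [det_mul, det_fin_two_of, hm]; ring
  have hc2 : (m * !![1, 0; 1, 1] : Matrix (Fin 2) (Fin 2) (ZMod p)) 1 0 ≠ 0 := by
    simpa [Matrix.mul_apply, Fin.sum_univ_two, hc] using hm'
  obtain ⟨M', hM'det, hM'map⟩ := sl2_lift_aux p _ hd hc2
  refine ⟨M' * !![1, 0; -1, 1], ?_, ?_⟩
  · rw [det_mul, det_fin_two_of, hM'det]; ring
  · rw [show (Int.cast : ℤ → ZMod p) = ⇑(Int.castRingHom (ZMod p)) from rfl, Matrix.map_mul]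
    rw [show (Int.cast : ℤ → ZMod p) = ⇑(Int.castRingHom (ZMod p)) from rfl] at hM'map
    rw [hM'map]
    have : (!![(1:ℤ), 0; -1, 1]).map (⇑(Int.castRingHom (ZMod p))) = !![1, 0; -1, 1] := by
      ext i j; fin_cases i <;> fin_cases j <;> simp
    rw [this, Matrix.mul_assoc, Matrix.mul_fin_two]
    norm_num [Matrix.one_fin_two.symm]

lemma lift_parabolic (p : ℕ) [Fact p.Prime] (B : Matrix (Fin 2 ⊕ Fin 2) (Fin 2 ⊕ Fin 2) (ZMod p))
    (hB : B ∈ symplecticGroup (Fin 2) (ZMod p)) (hcB : B.toBlocks₂₁ = 0) :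
    ∃ M ∈ symplecticGroup (Fin 2) ℤ, M.map (Int.cast : ℤ → ZMod p) = B := by
  set a := B.toBlocks₁₁ with ha
  set b := B.toBlocks₁₂ with hb
  set d := B.toBlocks₂₂ with hd
  have hBeq : B = fromBlocks a b 0 d := by
    rw [ha, hb, hd, ← hcB, fromBlocks_toBlocks]
  rw [hBeq] at hB
  obtain ⟨h1, h2, h3⟩ := (sp_blocks_iff a b d).mp hB
  have h4 : dᵀ * a = 1 := mul_eq_one_comm.mp h1
  have h5 : aᵀ * d = 1 := mul_eq_one_comm.mp h2
  set u := a.det with hu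
  set w := (dᵀ).det with hw
  have huw : u * w = 1 := by
    rw [hu, hw, ← det_mul, h1, det_one]
  set a₁ := a * !![w, 0; 0, 1] with ha₁
  have hdet₁ : a₁.det = 1 := by
    rw [ha₁, det_mul, det_fin_two_of, ← hu]
    rw [show u * (w * 1 - 0 * 0) = u * w by ring, huw]
  obtain ⟨m₁, hm₁det, hm₁map⟩ := sl2_lift p a₁ hdet₁
  obtain ⟨m₂, hm₂det, hm₂map⟩ := sl2_lift p !![u, 0; 0, w]
    (by rw [det_fin_two_of]; rw [show u * w - 0 * 0 = u * w by ring, huw])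
  set s := dᵀ * b with hs
  have hsymm : sᵀ = s := by
    have key : bᵀ * d = dᵀ * b := by
      calc bᵀ * d = (dᵀ * a) * (bᵀ * d) := by rw [h4, Matrix.one_mul]
        _ = dᵀ * (a * bᵀ) * d := by simp only [Matrix.mul_assoc]
        _ = dᵀ * (b * aᵀ) * d := by rw [← h3]
        _ = dᵀ * b * (aᵀ * d) := by simp only [Matrix.mul_assoc]
        _ = dᵀ * b := by rw [h5, Matrix.mul_one]
    rw [hs, Matrix.transpose_mul, Matrix.transpose_transpose, key]
  set S : Matrix (Fin 2) (Fin 2) ℤ := Matrix.of fun i j => ((s i j).val : ℤ) with hS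
  have hSsymm : Sᵀ = S := by
    ext i j
    have := congrFun (congrFun hsymm i) j
    rw [Matrix.transpose_apply] at this ⊢
    simp only [hS, Matrix.of_apply, this]
  have hSmap : S.map (⇑(Int.castRingHom (ZMod p))) = s := by
    ext i j
    simp [hS, Matrix.map_apply, zval_cast]
  set D₁ : Matrix (Fin 2) (Fin 2) ℤ := (m₁.adjugate)ᵀ with hD₁
  set M₁ := fromBlocks m₁ 0 0 D₁ with hM₁def
  have hM₁ : M₁ ∈ symplecticGroup (Fin 2) ℤ := by
    rw [hM₁def, sp_blocks_iff]
    refine ⟨?_, ?_, by simp⟩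
    · rw [hD₁, Matrix.transpose_transpose, Matrix.mul_adjugate, hm₁det, one_smul]
    · rw [hD₁, ← Matrix.transpose_mul, Matrix.mul_adjugate, hm₁det, one_smul, Matrix.transpose_one]
  set M₂ := Emb m₂ with hM₂def
  have hM₂ : M₂ ∈ symplecticGroup (Fin 2) ℤ := Emb_mem m₂ hm₂det
  set M₃ := fromBlocks (1 : Matrix (Fin 2) (Fin 2) ℤ) S (0 : Matrix (Fin 2) (Fin 2) ℤ) (1 : Matrix (Fin 2) (Fin 2) ℤ) with hM₃def
  have hM₃ : M₃ ∈ symplecticGroup (Fin 2) ℤ := by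
    rw [hM₃def, sp_blocks_iff]
    exact ⟨by simp, by simp, by simp [hSsymm]⟩
  have hMmem : M₁ * M₂ * M₃ ∈ symplecticGroup (Fin 2) ℤ :=
    mul_mem (mul_mem hM₁ hM₂) hM₃
  refine ⟨M₁ * M₂ * M₃, hMmem, ?_⟩
  rw [show (Int.cast : ℤ → ZMod p) = ⇑(Int.castRingHom (ZMod p)) from rfl] at hm₁map hm₂map ⊢
  set f := Int.castRingHom (ZMod p) with hf
  set D' : Matrix (Fin 2) (Fin 2) (ZMod p) := ((a₁.adjugate)ᵀ) * !![w, 0; 0, 1] with hD'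
  have hmapeq : (M₁ * M₂ * M₃).map ⇑f = fromBlocks a b 0 D' := by
    rw [Matrix.map_mul, Matrix.map_mul, hM₁def, hM₂def, hM₃def, Emb_map, hm₂map, Emb_diag,
      fromBlocks_map, fromBlocks_map]
    have hD₁map : D₁.map ⇑f = (a₁.adjugate)ᵀ := by
      have hadj : m₁.adjugate.map ⇑f = a₁.adjugate := by
        have h := f.map_adjugate m₁
        simpa [RingHom.mapMatrix_apply, hm₁map] using h
      rw [hD₁, Matrix.transpose_map, hadj]
    rw [hD₁map, hm₁map, hSmap]
    simp only [Matrix.map_zero f f.map_zero, Matrix.map_one f f.map_zero f.map_one]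
    rw [fromBlocks_multiply, fromBlocks_multiply]
    have hblock : a₁ * !![u, 0; 0, 1] = a := by
      rw [ha₁, Matrix.mul_assoc, Matrix.mul_fin_two]
      rw [show !![w * u + 0 * 0, w * 0 + 0 * 1; 0 * u + 1 * 0, 0 * 0 + 1 * 1]
          = !![w * u, 0; 0, 1] by norm_num]
      rw [mul_comm w u, huw, ← Matrix.one_fin_two, Matrix.mul_one]
    have hbs : a * s = b := by
      rw [hs, ← Matrix.mul_assoc, h1, Matrix.one_mul]
    simp only [Matrix.mul_zero, Matrix.zero_mul, Matrix.mul_one, Matrix.one_mul, add_zero,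
      zero_add]
    rw [hblock, hbs]
  rw [hmapeq, hBeq]
  have hsp' : fromBlocks a b 0 D' ∈ symplecticGroup (Fin 2) (ZMod p) := by
    rw [← hmapeq]
    exact map_mem_sp f _ hMmem
  obtain ⟨-, hD'a, -⟩ := (sp_blocks_iff a b D').mp hsp'
  have hD'd : D' = d := by
    calc D' = D' * (aᵀ * d) := by rw [h5, Matrix.mul_one]
      _ = d := by rw [← Matrix.mul_assoc, hD'a, Matrix.one_mul]
  rw [hD'd]

end Helpers

/-- For every prime `p`, the image of `Γ₀⁽²⁾(p)` under the entrywise reduction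
map `Sp(4,ℤ) → Sp(4,𝔽_p)` equals the stabilizer in `Sp(4,𝔽_p)` of the `2`-dimensional
totally isotropic subspace `𝔽_p × 𝔽_p × 0 × 0 = span{e₁, e₂}` of `𝔽_p⁴`; equivalently,
`Γ₀⁽²⁾(p)` is the full preimage of that stabilizer under the reduction map. -/
theorem image_Gamma0Sp4_eq_stabilizer (p : ℕ) (hp : p.Prime) :
    (∀ B ∈ Matrix.symplecticGroup (Fin 2) (ZMod p),
      ((stdIsotropicPlane p).map (Matrix.mulVecLin B) = stdIsotropicPlane p ↔
        ∃ A : Matrix.symplecticGroup (Fin 2) ℤ, A ∈ Gamma0Sp4 p ∧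
          (A : Matrix (Fin 2 ⊕ Fin 2) (Fin 2 ⊕ Fin 2) ℤ).map (Int.cast : ℤ → ZMod p) = B)) ∧
    (∀ A : Matrix.symplecticGroup (Fin 2) ℤ,
      (A ∈ Gamma0Sp4 p ↔
        (stdIsotropicPlane p).map (Matrix.mulVecLin
          ((A : Matrix (Fin 2 ⊕ Fin 2) (Fin 2 ⊕ Fin 2) ℤ).map (Int.cast : ℤ → ZMod p)))
          = stdIsotropicPlane p)) := by
  haveI : Fact p.Prime := ⟨hp⟩
  have memG : ∀ A : Matrix.symplecticGroup (Fin 2) ℤ, A ∈ Gamma0Sp4 p ↔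
      (∀ i j : Fin 2,
        (p : ℤ) ∣ (A : Matrix (Fin 2 ⊕ Fin 2) (Fin 2 ⊕ Fin 2) ℤ) (Sum.inr i) (Sum.inl j)) :=
    fun A => Iff.rfl
  constructor
  · intro B hB
    rw [stab_iff p B hB]
    constructor
    · intro hc
      obtain ⟨M, hM, hmap⟩ := lift_parabolic p B hB (by ext i j; exact hc i j)
      refine ⟨⟨M, hM⟩, (memG _).mpr fun i j => ?_, hmap⟩
      refine (ZMod.intCast_zmod_eq_zero_iff_dvd _ p).mp ?_
      have h := congrFun (congrFun hmap (Sum.inr i)) (Sum.inl j)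
      rw [Matrix.map_apply] at h
      rw [h]
      exact hc i j
    · rintro ⟨A, hA, rfl⟩ i j
      rw [Matrix.map_apply]
      exact (ZMod.intCast_zmod_eq_zero_iff_dvd _ p).mpr ((memG A).mp hA i j)
  · intro A
    have hA2 : (A : Matrix (Fin 2 ⊕ Fin 2) (Fin 2 ⊕ Fin 2) ℤ) ∈ symplecticGroup (Fin 2) ℤ :=
      A.property
    have hAbar : ((A : Matrix (Fin 2 ⊕ Fin 2) (Fin 2 ⊕ Fin 2) ℤ).map (Int.cast : ℤ → ZMod p))
        ∈ symplecticGroup (Fin 2) (ZMod p) :=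
      map_mem_sp (Int.castRingHom (ZMod p)) _ hA2
    rw [stab_iff p _ hAbar, memG]
    constructor
    · intro hA i j
      rw [Matrix.map_apply]
      exact (ZMod.intCast_zmod_eq_zero_iff_dvd _ p).mpr (hA i j)
    · intro h i j
      refine (ZMod.intCast_zmod_eq_zero_iff_dvd _ p).mp ?_
      rw [← Matrix.map_apply (f := (Int.cast : ℤ → ZMod p))]
      exact h i j
end

section
/- Let g ≥ 1, let τ be an element of the Siegel upper half space H_g, and let M = (a b; c d) ∈ Sp(2g,ℤ). Then the matrix M·τ = (aτ + b)(cτ + d)⁻¹ again lies in H_g: it is symmetric and its imaginary part is positive definite. -/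
open Matrix

/-- The Siegel upper half space `H_g`: the set of symmetric `g×g` complex matrices
whose (entrywise) imaginary part is positive definite. -/
def SiegelUpperHalf (g : ℕ) : Set (Matrix (Fin g) (Fin g) ℂ) :=
  {τ | τ.IsSymm ∧ (τ.map Complex.im).PosDef}

/-- Core positivity: if `Y` is a real positive definite matrix, then for any nonzero
complex vector `w`, the Hermitian form of the complexified `Y` has positive real part. -/
lemma re_pos_of_posDef {g : ℕ} {Y : Matrix (Fin g) (Fin g) ℝ} (hY : Y.PosDef)
    (w : Fin g → ℂ) (hw : w ≠ 0) :
    0 < (star w ⬝ᵥ (Y.map (Complex.ofReal)) *ᵥ w).re := by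
  classical
  set u : Fin g → ℝ := fun i => (w i).re with hu
  set v : Fin g → ℝ := fun i => (w i).im with hv
  have hexp : (star w ⬝ᵥ (Y.map (Complex.ofReal)) *ᵥ w).re
      = u ⬝ᵥ Y *ᵥ u + v ⬝ᵥ Y *ᵥ v := by
    simp only [dotProduct, mulVec, Pi.star_apply, Finset.mul_sum, Complex.re_sum,
      Finset.sum_add_distrib.symm]
    refine Finset.sum_congr rfl fun i _ => ?_
    refine Finset.sum_congr rfl fun j _ => ?_
    simp [Complex.mul_re, Complex.mul_im, hu, hv]
  rw [hexp]
  have hYsd := hY.posSemidef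
  have huv : u ≠ 0 ∨ v ≠ 0 := by
    by_contra h
    push_neg at h
    apply hw
    funext i
    have h1 : u i = 0 := by rw [h.1]; rfl
    have h2 : v i = 0 := by rw [h.2]; rfl
    exact Complex.ext h1 h2
  have hu' : 0 ≤ u ⬝ᵥ Y *ᵥ u := by simpa using hYsd.dotProduct_mulVec_nonneg u
  have hv' : 0 ≤ v ⬝ᵥ Y *ᵥ v := by simpa using hYsd.dotProduct_mulVec_nonneg v
  rcases huv with h | h
  · have := hY.dotProduct_mulVec_pos h
    simp only [star_trivial] at this
    linarith
  · have := hY.dotProduct_mulVec_pos h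
    simp only [star_trivial] at this
    linarith

/-- Entrywise: a symmetric complex matrix minus its conjugate transpose is `2i` times
the complexification of its imaginary part. -/
lemma sub_conjTranspose_of_symm {g : ℕ} {S : Matrix (Fin g) (Fin g) ℂ} (h : Sᵀ = S) :
    S - Sᴴ = (2 * Complex.I) • (S.map Complex.im).map Complex.ofReal := by
  ext i j
  have hS : S j i = S i j := Matrix.IsSymm.apply h i j
  simp only [Matrix.sub_apply, Matrix.conjTranspose_apply, Matrix.smul_apply,
    Matrix.map_apply, hS, smul_eq_mul]
  rw [Complex.star_def, Complex.sub_conj]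
  push_cast
  ring

/-- Moving a matrix across the Hermitian inner product. -/
lemma star_dotProduct_conjTranspose_mulVec {g : ℕ} (M : Matrix (Fin g) (Fin g) ℂ)
    (x z : Fin g → ℂ) : star x ⬝ᵥ (Mᴴ *ᵥ z) = star (M *ᵥ x) ⬝ᵥ z := by
  rw [star_mulVec, dotProduct_mulVec]

/-- Let `g ≥ 1`, let `τ ∈ H_g` and let `M = (a b; c d) ∈ Sp(2g,ℤ)`.
Then `M·τ = (aτ + b)(cτ + d)⁻¹` again lies in `H_g`: it is symmetric and its
imaginary part is positive definite. -/
theorem symplectic_action_mem_siegelUpperHalf (g : ℕ) (hg : 1 ≤ g)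
    (τ : Matrix (Fin g) (Fin g) ℂ) (hτ : τ ∈ SiegelUpperHalf g)
    (a b c d : Matrix (Fin g) (Fin g) ℤ)
    (hM : Matrix.fromBlocks a b c d ∈ Matrix.symplecticGroup (Fin g) ℤ) :
    (a.map (Int.cast : ℤ → ℂ) * τ + b.map (Int.cast : ℤ → ℂ)) *
      (c.map (Int.cast : ℤ → ℂ) * τ + d.map (Int.cast : ℤ → ℂ))⁻¹
      ∈ SiegelUpperHalf g := by
  classical
  obtain ⟨hτsymm, hY⟩ := hτ
  have hτT : τᵀ = τ := hτsymm
  set Y : Matrix (Fin g) (Fin g) ℝ := τ.map Complex.im with hYdef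
  set Yc : Matrix (Fin g) (Fin g) ℂ := Y.map Complex.ofReal with hYcdef
  -- the integer relations coming from being symplectic
  rw [SymplecticGroup.mem_iff'] at hM
  rw [Matrix.J, fromBlocks_transpose, fromBlocks_multiply, fromBlocks_multiply] at hM
  simp only [Matrix.mul_zero, Matrix.mul_one, Matrix.mul_neg, Matrix.zero_mul, Matrix.one_mul,
    Matrix.neg_mul, zero_add, add_zero, neg_zero] at hM
  have h11 := congrArg Matrix.toBlocks₁₁ hM
  have h12 := congrArg Matrix.toBlocks₁₂ hM
  have h21 := congrArg Matrix.toBlocks₂₁ hM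
  have h22 := congrArg Matrix.toBlocks₂₂ hM
  simp only [toBlocks_fromBlocks₁₁, toBlocks_fromBlocks₁₂, toBlocks_fromBlocks₂₁,
    toBlocks_fromBlocks₂₂] at h11 h12 h21 h22
  have e1 : cᵀ * a = aᵀ * c := by linear_combination (norm := abel) h11
  have e2 : aᵀ * d - cᵀ * b = 1 := by linear_combination (norm := abel) -h12
  have e3 : dᵀ * a - bᵀ * c = 1 := by linear_combination (norm := abel) h21
  have e4 : dᵀ * b = bᵀ * d := by linear_combination (norm := abel) h22
  -- cast the relations to ℂ
  set F : Matrix (Fin g) (Fin g) ℤ →+* Matrix (Fin g) (Fin g) ℂ :=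
    (Int.castRingHom ℂ).mapMatrix with hF
  set A : Matrix (Fin g) (Fin g) ℂ := a.map (Int.cast : ℤ → ℂ) with hA
  set B : Matrix (Fin g) (Fin g) ℂ := b.map (Int.cast : ℤ → ℂ) with hB
  set C : Matrix (Fin g) (Fin g) ℂ := c.map (Int.cast : ℤ → ℂ) with hC
  set D : Matrix (Fin g) (Fin g) ℂ := d.map (Int.cast : ℤ → ℂ) with hD
  have hFa : F a = A := rfl
  have hFb : F b = B := rfl
  have hFc : F c = C := rfl
  have hFd : F d = D := rfl
  have hFtr : ∀ x : Matrix (Fin g) (Fin g) ℤ, F xᵀ = (F x)ᵀ := fun x => by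
    simp [hF, RingHom.mapMatrix_apply, Matrix.transpose_map]
  have z1 : Cᵀ * A = Aᵀ * C := by
    have := congrArg F e1
    simpa [_root_.map_mul, hFtr, hFa, hFc] using this
  have z2 : Aᵀ * D - Cᵀ * B = 1 := by
    have := congrArg F e2
    simpa [_root_.map_sub, _root_.map_mul, _root_.map_one, hFtr, hFa, hFb, hFc, hFd] using this
  have z3 : Dᵀ * A - Bᵀ * C = 1 := by
    have := congrArg F e3
    simpa [_root_.map_sub, _root_.map_mul, _root_.map_one, hFtr, hFa, hFb, hFc, hFd] using this
  have z4 : Dᵀ * B = Bᵀ * D := by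
    have := congrArg F e4
    simpa [_root_.map_mul, hFtr, hFb, hFd] using this
  -- real-entried matrices are Hermitian-transposed
  have hstar : ∀ x : Matrix (Fin g) (Fin g) ℤ,
      (x.map (Int.cast : ℤ → ℂ))ᴴ = (x.map (Int.cast : ℤ → ℂ))ᵀ := fun x => by
    ext i j
    simp [Matrix.conjTranspose_apply, Matrix.map_apply]
  have hAH : Aᴴ = Aᵀ := hstar a
  have hBH : Bᴴ = Bᵀ := hstar b
  have hCH : Cᴴ = Cᵀ := hstar c
  have hDH : Dᴴ = Dᵀ := hstar d
  have hτH : τᴴ = τ.map (starRingEnd ℂ) := by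
    ext i j
    simp only [Matrix.conjTranspose_apply, Matrix.map_apply]
    rw [Matrix.IsSymm.apply hτsymm i j]
    rfl
  set P : Matrix (Fin g) (Fin g) ℂ := A * τ + B with hP
  set N : Matrix (Fin g) (Fin g) ℂ := C * τ + D with hN
  have hPT : Pᵀ = τ * Aᵀ + Bᵀ := by
    rw [hP, transpose_add, transpose_mul, hτT]
  have hNT : Nᵀ = τ * Cᵀ + Dᵀ := by
    rw [hN, transpose_add, transpose_mul, hτT]
  have hPH : Pᴴ = τ.map (starRingEnd ℂ) * Aᵀ + Bᵀ := by
    rw [hP, conjTranspose_add, conjTranspose_mul, hτH, hAH, hBH]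
  have hNH : Nᴴ = τ.map (starRingEnd ℂ) * Cᵀ + Dᵀ := by
    rw [hN, conjTranspose_add, conjTranspose_mul, hτH, hCH, hDH]
  -- Identity (I): Pᵀ N = Nᵀ P
  have hz1' : Aᵀ * C - Cᵀ * A = 0 := by linear_combination (norm := abel) -z1
  have hz3' : Bᵀ * C - Dᵀ * A = -1 := by linear_combination (norm := abel) -z3
  have hz4' : Bᵀ * D - Dᵀ * B = 0 := by linear_combination (norm := abel) -z4
  have hz5' : Cᵀ * A - Aᵀ * C = 0 := by linear_combination (norm := abel) z1
  have hz6' : Cᵀ * B - Aᵀ * D = -1 := by linear_combination (norm := abel) -z2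
  have hz7' : Dᵀ * B - Bᵀ * D = 0 := by linear_combination (norm := abel) z4
  have hI : Pᵀ * N = Nᵀ * P := by
    have expand : Pᵀ * N - Nᵀ * P
        = τ * (Aᵀ * C - Cᵀ * A) * τ + τ * (Aᵀ * D - Cᵀ * B)
          + (Bᵀ * C - Dᵀ * A) * τ + (Bᵀ * D - Dᵀ * B) := by
      rw [hPT, hNT, hP, hN]; noncomm_ring
    rw [hz1', z2, hz3', hz4'] at expand
    simp only [Matrix.mul_zero, Matrix.zero_mul, Matrix.mul_one, Matrix.neg_mul,
      Matrix.one_mul, add_zero, zero_add] at expand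
    have expand' : Pᵀ * N - Nᵀ * P = 0 := by rw [expand]; abel
    exact sub_eq_zero.mp expand'
  -- Identity (II): Nᴴ P - Pᴴ N = 2i Yc
  have hsubconj : τ - τᴴ = (2 * Complex.I) • Yc := sub_conjTranspose_of_symm hτT
  have hII : Nᴴ * P - Pᴴ * N = (2 * Complex.I) • Yc := by
    have expand : Nᴴ * P - Pᴴ * N
        = τ.map (starRingEnd ℂ) * (Cᵀ * A - Aᵀ * C) * τ
          + τ.map (starRingEnd ℂ) * (Cᵀ * B - Aᵀ * D)
          + (Dᵀ * A - Bᵀ * C) * τ + (Dᵀ * B - Bᵀ * D) := by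
      rw [hPH, hNH, hP, hN]; noncomm_ring
    rw [hz5', hz6', z3, hz7'] at expand
    simp only [Matrix.mul_zero, Matrix.zero_mul, Matrix.mul_neg, Matrix.mul_one,
      Matrix.one_mul, add_zero, zero_add] at expand
    rw [expand, ← hsubconj, hτH]
    abel
  -- N is invertible
  have hNdet : IsUnit N.det := by
    by_contra hdet
    have hdet0 : N.det = 0 := by
      rcases eq_or_ne N.det 0 with h | h
      · exact h
      · exact absurd (Ne.isUnit h) hdet
    obtain ⟨v, hvne, hv0⟩ := (Matrix.exists_mulVec_eq_zero_iff).mpr hdet0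
    have hzero : star v ⬝ᵥ ((Nᴴ * P - Pᴴ * N) *ᵥ v) = 0 := by
      rw [Matrix.sub_mulVec, dotProduct_sub, ← Matrix.mulVec_mulVec, ← Matrix.mulVec_mulVec,
        star_dotProduct_conjTranspose_mulVec, star_dotProduct_conjTranspose_mulVec, hv0]
      simp
    rw [hII] at hzero
    have : (2 * Complex.I) * (star v ⬝ᵥ Yc *ᵥ v) = 0 := by
      rw [← hzero, Matrix.smul_mulVec, dotProduct_smul, smul_eq_mul]
    have h2I : (2 * Complex.I) ≠ 0 := by simp [Complex.I_ne_zero]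
    have hq : star v ⬝ᵥ Yc *ᵥ v = 0 := by
      rcases mul_eq_zero.mp this with h | h
      · exact absurd h h2I
      · exact h
    have := re_pos_of_posDef hY v hvne
    rw [hYcdef] at hq
    rw [hq] at this
    simp at this
  have hNTdet : IsUnit Nᵀ.det := by rwa [Matrix.det_transpose]
  have hNHdet : IsUnit Nᴴ.det := by
    rw [Matrix.det_conjTranspose]
    exact hNdet.star
  -- the image σ = P N⁻¹
  -- symmetry
  have hσsymm : (P * N⁻¹)ᵀ = P * N⁻¹ := by
    rw [transpose_mul, Matrix.transpose_nonsing_inv]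
    calc Nᵀ⁻¹ * Pᵀ = Nᵀ⁻¹ * (Pᵀ * N * N⁻¹) := by
          rw [Matrix.mul_assoc, Matrix.mul_nonsing_inv _ hNdet, Matrix.mul_one]
      _ = Nᵀ⁻¹ * (Nᵀ * (P * N⁻¹)) := by rw [hI, Matrix.mul_assoc]
      _ = P * N⁻¹ := by
          rw [← Matrix.mul_assoc, Matrix.nonsing_inv_mul _ hNTdet, Matrix.one_mul]
  -- imaginary part
  have hdiff : P * N⁻¹ - (P * N⁻¹)ᴴ = (2 * Complex.I) • (Nᴴ⁻¹ * Yc * N⁻¹) := by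
    have h1 : (P * N⁻¹)ᴴ = Nᴴ⁻¹ * (Pᴴ * N) * N⁻¹ := by
      rw [conjTranspose_mul, Matrix.conjTranspose_nonsing_inv, Matrix.mul_assoc,
        Matrix.mul_assoc, Matrix.mul_nonsing_inv _ hNdet, Matrix.mul_one]
    have h2 : P * N⁻¹ = Nᴴ⁻¹ * (Nᴴ * P) * N⁻¹ := by
      rw [← Matrix.mul_assoc, Matrix.nonsing_inv_mul _ hNHdet, Matrix.one_mul]
    rw [h1, h2, ← Matrix.sub_mul, ← Matrix.mul_sub, hII, Matrix.mul_smul, Matrix.smul_mul]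
  have hdiff2 : P * N⁻¹ - (P * N⁻¹)ᴴ
      = (2 * Complex.I) • (((P * N⁻¹).map Complex.im).map Complex.ofReal) :=
    sub_conjTranspose_of_symm hσsymm
  have h2I : (2 * Complex.I) ≠ 0 := by simp [Complex.I_ne_zero]
  have hIm : ((P * N⁻¹).map Complex.im).map Complex.ofReal = Nᴴ⁻¹ * Yc * N⁻¹ := by
    exact smul_right_injective (Matrix (Fin g) (Fin g) ℂ) h2I
      (hdiff2.symm.trans hdiff)
  -- conclude
  refine ⟨hσsymm, posDef_iff_dotProduct_mulVec.mpr ⟨?_, ?_⟩⟩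
  · -- Hermitian (= symmetric, over ℝ)
    show ((P * N⁻¹).map Complex.im)ᴴ = (P * N⁻¹).map Complex.im
    ext i j
    simp only [Matrix.conjTranspose_apply, Matrix.map_apply, star_trivial]
    rw [Matrix.IsSymm.apply hσsymm i j]
  · -- positive definiteness
    intro x hx
    set xc : Fin g → ℂ := fun i => (x i : ℂ) with hxc
    have hxcne : xc ≠ 0 := by
      intro h
      apply hx
      funext i
      have := congrFun h i
      simpa [hxc] using this
    have hstarxc : star xc = xc := by
      funext i
      simp [hxc]
    set w : Fin g → ℂ := N⁻¹ *ᵥ xc with hw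
    have hwne : w ≠ 0 := by
      intro h
      apply hxcne
      have : N *ᵥ w = xc := by
        rw [hw, Matrix.mulVec_mulVec, Matrix.mul_nonsing_inv _ hNdet, Matrix.one_mulVec]
      rw [h, Matrix.mulVec_zero] at this
      exact this.symm
    have hcast : ((Complex.ofRealHom (x ⬝ᵥ ((P * N⁻¹).map Complex.im) *ᵥ x)) : ℂ)
        = star xc ⬝ᵥ (((P * N⁻¹).map Complex.im).map Complex.ofReal) *ᵥ xc := by
      rw [hstarxc]
      calc (Complex.ofRealHom (x ⬝ᵥ ((P * N⁻¹).map Complex.im) *ᵥ x) : ℂ)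
          = (Complex.ofRealHom ∘ x) ⬝ᵥ
              (Complex.ofRealHom ∘ (((P * N⁻¹).map Complex.im) *ᵥ x)) :=
            RingHom.map_dotProduct Complex.ofRealHom _ _
        _ = xc ⬝ᵥ (((P * N⁻¹).map Complex.im).map Complex.ofReal) *ᵥ xc := by
            congr 1
            funext i
            exact RingHom.map_mulVec Complex.ofRealHom _ _ i
    have hval : star xc ⬝ᵥ (((P * N⁻¹).map Complex.im).map Complex.ofReal) *ᵥ xc
        = star w ⬝ᵥ Yc *ᵥ w := by
      rw [hIm, ← Matrix.conjTranspose_nonsing_inv, Matrix.mul_assoc,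
        ← Matrix.mulVec_mulVec, star_dotProduct_conjTranspose_mulVec, ← hw,
        ← Matrix.mulVec_mulVec, ← hw]
    have hpos := re_pos_of_posDef hY w hwne
    rw [← hYcdef] at hpos
    have hre : x ⬝ᵥ ((P * N⁻¹).map Complex.im) *ᵥ x = (star w ⬝ᵥ Yc *ᵥ w).re := by
      have := congrArg Complex.re (hcast.trans hval)
      simpa using this
    simpa [star_trivial, hre] using hpos
end
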